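/- arXiv:2501.02205 — 2 statements merged into one kernel-verified Lean document; each statement's English description precedes it below -/
import Mathlib

section
/- Let P and Q be probability measures on a measurable space S, and let V : S → ℝ be a nonnegative measurable function that is integrable with respect to both P and Q and satisfies ∫ exp(V²) dQ < ∞. If the Kullback–Leibler divergence D_KL(P‖Q) is finite, then ∫ V dQ − ∫ V dP ≤ √2 · (1 + log ∫ exp(V²) dQ)^{1/2} · (D_KL(P‖Q))^{1/2}. -/
/-!
Tilting `Q` by `exp g` and applying Gibbs' inequality to `P` and the tilted measure gives the
Donsker–Varadhan bound `∫ g dP ≤ D_KL(P‖Q) + log ∫ exp g dQ`. For `g = -t V` with `V ≥ 0`, the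
estimate `exp (-u) ≤ 1 - u + u² / 2` bounds the log-moment by `-t ∫ V dQ + t² ∫ V² dQ / 2`, and
`∫ V² dQ ≤ log ∫ exp (V²) dQ` by Jensen. Hence `t (∫ V dQ - ∫ V dP) ≤ D_KL + t² C / 2` for every
`t > 0`, with `C = 1 + log ∫ exp (V²) dQ`, and the choice `t = (∫ V dQ - ∫ V dP) / C` concludes.
-/

open MeasureTheory Real

theorem Real.exp_neg_le_one_sub_add_sq_div_two {u : ℝ} (hu : 0 ≤ u) :
    exp (-u) ≤ 1 - u + u ^ 2 / 2 := by
  have hpos : 0 < 1 + u + u ^ 2 / 2 := by positivity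
  calc exp (-u) = (exp u)⁻¹ := exp_neg u
    _ ≤ (1 + u + u ^ 2 / 2)⁻¹ := inv_anti₀ hpos (quadratic_le_exp_of_nonneg hu)
    _ ≤ 1 - u + u ^ 2 / 2 := by
      rw [inv_le_iff_one_le_mul₀ hpos]
      nlinarith [sq_nonneg u, sq_nonneg (u ^ 2)]

theorem Real.le_sqrt_of_forall_mul_le_add_sq_mul {a c K : ℝ} (hc : 0 < c)
    (h : ∀ t > 0, t * a ≤ K + t ^ 2 * c / 2) : a ≤ √(2 * c * K) := by
  rcases le_or_gt a 0 with ha | ha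
  · exact ha.trans (sqrt_nonneg _)
  apply le_sqrt_of_sq_le
  have := h (a / c) (div_pos ha hc)
  field_simp at this
  nlinarith

namespace MeasureTheory

variable {α : Type*} [MeasurableSpace α] {P Q : Measure α}

theorem integral_le_integral_llr_add_log_integral_exp [IsProbabilityMeasure P]
    [IsProbabilityMeasure Q] {g : α → ℝ} (hPQ : P ≪ Q) (hllr : Integrable (llr P Q) P)
    (hgP : Integrable g P) (hgQ : Integrable (fun x ↦ exp (g x)) Q) :
    ∫ x, g x ∂P ≤ ∫ x, llr P Q x ∂P + log (∫ x, exp (g x) ∂Q) := by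
  have := isProbabilityMeasure_tilted hgQ
  have gibbs := InformationTheory.integral_llr_add_sub_measure_univ_nonneg
    (hPQ.trans (absolutelyContinuous_tilted hgQ)) (integrable_llr_tilted_right hPQ hgP hllr hgQ)
  rw [integral_llr_tilted_right hPQ hgP hgQ hllr, probReal_univ, probReal_univ] at gibbs
  linarith

theorem integral_le_log_integral_exp [IsProbabilityMeasure Q] {g : α → ℝ}
    (hg : Integrable g Q) (hgQ : Integrable (fun x ↦ exp (g x)) Q) :
    ∫ x, g x ∂Q ≤ log (∫ x, exp (g x) ∂Q) := by
  have dv := integral_le_integral_llr_add_log_integral_exp (.refl Q)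
    ((integrable_congr (llr_self Q)).mpr (integrable_zero _ _ _)) hg hgQ
  rwa [integral_congr_ae (llr_self Q), integral_zero', zero_add] at dv

variable {V : α → ℝ} {t : ℝ}

theorem integrable_exp_neg_mul [IsFiniteMeasure Q] (hV : AEStronglyMeasurable V Q)
    (hV0 : ∀ᵐ x ∂Q, 0 ≤ V x) (ht : 0 ≤ t) : Integrable (fun x ↦ exp (-(t * V x))) Q := by
  refine (integrable_const 1).mono' (continuous_exp.comp_aestronglyMeasurable
    (hV.const_mul t).neg) ?_
  filter_upwards [hV0] with x hx
  rw [norm_of_nonneg (exp_pos _).le, exp_le_one_iff, neg_nonpos]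
  exact mul_nonneg ht hx

theorem log_integral_exp_neg_mul_le [IsProbabilityMeasure Q] (hV : Integrable V Q)
    (hV2 : Integrable (fun x ↦ V x ^ 2) Q) (hV0 : ∀ᵐ x ∂Q, 0 ≤ V x) (ht : 0 ≤ t) :
    log (∫ x, exp (-(t * V x)) ∂Q) ≤ -(t * ∫ x, V x ∂Q) + t ^ 2 * (∫ x, V x ^ 2 ∂Q) / 2 := by
  have hexp := integrable_exp_neg_mul hV.aestronglyMeasurable hV0 ht
  have hlin : Integrable (fun x ↦ 1 - t * V x) Q := (integrable_const 1).sub (hV.const_mul t)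
  have hsq : Integrable (fun x ↦ t ^ 2 * V x ^ 2 / 2) Q := (hV2.const_mul _).div_const 2
  have hquad_eq : ∫ x, (1 - t * V x + t ^ 2 * V x ^ 2 / 2) ∂Q
      = 1 - t * ∫ x, V x ∂Q + t ^ 2 * (∫ x, V x ^ 2 ∂Q) / 2 := by
    rw [integral_add hlin hsq, integral_sub (integrable_const 1) (hV.const_mul t), integral_div,
      integral_const_mul, integral_const_mul, integral_const, probReal_univ, one_smul]
  have hmono : ∫ x, exp (-(t * V x)) ∂Q ≤ ∫ x, (1 - t * V x + t ^ 2 * V x ^ 2 / 2) ∂Q := by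
    refine integral_mono_ae hexp (hlin.add hsq) ?_
    filter_upwards [hV0] with x hx
    have := exp_neg_le_one_sub_add_sq_div_two (mul_nonneg ht hx)
    rwa [mul_pow] at this
  have hpos := integral_exp_pos hexp
  calc log (∫ x, exp (-(t * V x)) ∂Q)
      ≤ log (∫ x, (1 - t * V x + t ^ 2 * V x ^ 2 / 2) ∂Q) := log_le_log hpos hmono
    _ ≤ ∫ x, (1 - t * V x + t ^ 2 * V x ^ 2 / 2) ∂Q - 1 :=
      log_le_sub_one_of_pos (hpos.trans_le hmono)
    _ = -(t * ∫ x, V x ∂Q) + t ^ 2 * (∫ x, V x ^ 2 ∂Q) / 2 := by rw [hquad_eq]; ring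

end MeasureTheory

theorem stmt1_general {S : Type*} [MeasurableSpace S] (P Q : Measure S)
    [IsProbabilityMeasure P] [IsProbabilityMeasure Q]
    (V : S → ℝ) (hV0 : ∀ s, 0 ≤ V s)
    (hVP : Integrable V P) (hVQ : Integrable V Q)
    (hexp : Integrable (fun s => Real.exp (V s ^ 2)) Q)
    (hac : P ≪ Q)
    (hKL : Integrable (fun s => Real.log ((P.rnDeriv Q s).toReal)) P) :
    ∫ s, V s ∂Q - ∫ s, V s ∂P ≤
      Real.sqrt 2 * Real.sqrt (1 + Real.log (∫ s, Real.exp (V s ^ 2) ∂Q)) *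
        Real.sqrt (∫ s, Real.log ((P.rnDeriv Q s).toReal) ∂P) := by
  have hV2 : Integrable (fun s ↦ V s ^ 2) Q := hexp.mono' (hVQ.1.pow 2)
    (.of_forall fun s ↦ by
      rw [norm_of_nonneg (sq_nonneg _)]; linarith [add_one_le_exp (V s ^ 2)])
  have hjensen := integral_le_log_integral_exp hV2 hexp
  have hC : 0 < 1 + log (∫ s, exp (V s ^ 2) ∂Q) := by
    linarith [integral_nonneg (μ := Q) (f := fun s ↦ V s ^ 2) fun s ↦ sq_nonneg (V s)]
  rw [← sqrt_mul zero_le_two, ← sqrt_mul (by positivity)]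
  refine le_sqrt_of_forall_mul_le_add_sq_mul hC fun t ht ↦ ?_
  have hV0' : ∀ᵐ s ∂Q, 0 ≤ V s := .of_forall hV0
  have dv := integral_le_integral_llr_add_log_integral_exp (g := fun s ↦ -(t * V s)) hac hKL
    (hVP.const_mul t).neg (integrable_exp_neg_mul hVQ.1 hV0' ht.le)
  have hmoment := log_integral_exp_neg_mul_le hVQ hV2 hV0' ht.le
  rw [integral_neg, integral_const_mul] at dv
  unfold llr at dv
  linarith [sq_nonneg t, mul_le_mul_of_nonneg_left hjensen (sq_nonneg t)]

/-- Let `P` and `Q` be probability measures on a measurable space `S`, and let `V : S → ℝ`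
be a nonnegative measurable function integrable w.r.t. both `P` and `Q` with
`∫ exp(V²) dQ < ∞`. If the Kullback–Leibler divergence
`D_KL(P‖Q) = ∫ log (dP/dQ) dP` is finite, then
`∫ V dQ − ∫ V dP ≤ √2 (1 + log ∫ exp(V²) dQ)^{1/2} (D_KL(P‖Q))^{1/2}`. -/
theorem stmt1 {S : Type*} [MeasurableSpace S] (P Q : Measure S)
    [IsProbabilityMeasure P] [IsProbabilityMeasure Q]
    (V : S → ℝ) (hV : Measurable V) (hV0 : ∀ s, 0 ≤ V s)
    (hVP : Integrable V P) (hVQ : Integrable V Q)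
    (hexp : Integrable (fun s => Real.exp (V s ^ 2)) Q)
    (hac : P ≪ Q)
    (hKL : Integrable (fun s => Real.log ((P.rnDeriv Q s).toReal)) P) :
    ∫ s, V s ∂Q - ∫ s, V s ∂P ≤
      Real.sqrt 2 * Real.sqrt (1 + Real.log (∫ s, Real.exp (V s ^ 2) ∂Q)) *
        Real.sqrt (∫ s, Real.log ((P.rnDeriv Q s).toReal) ∂P) :=
  stmt1_general P Q V hV0 hVP hVQ hexp hac hKL
end

section
/- Let X be a measurable space, let κ and η be Markov kernels from X to X, let γ ∈ [0,1), let r : X → ℝ be a bounded measurable reward with 0 ≤ r ≤ r_max, and let μ₀ be a probability measure on X. For a kernel ζ and x ∈ X let P^ζ_x be the trajectory measure of the ζ-chain started at x, define V_ζ(x) := Σ_{n≥0} γ^n E_{P^ζ_x}[r(X_n)] and J(ζ) := ∫ V_ζ dμ₀, and let μ^η_t denote the law of X_t under the η-chain started from μ₀. Define G(x) := ∫ V_κ(y) η(x, dy) − ∫ V_κ(y) κ(x, dy). Then J(η) − J(κ) = Σ_{t≥0} γ^{t+1} ∫ G(x) dμ^η_t(x). -/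
open MeasureTheory ProbabilityTheory

/-- The `n`-step transition kernel of a time-homogeneous Markov chain with one-step
kernel `κ`; under the Ionescu–Tulcea trajectory measure `P^κ_x`, the law of `X n` is
`kIter κ n x`. -/
noncomputable def kIter {X : Type*} [MeasurableSpace X] (κ : Kernel X X) : ℕ → Kernel X X
  | 0 => Kernel.id
  | n + 1 => κ ∘ₖ kIter κ n

/-- The discounted value `V_κ(x) = Σ_{n≥0} γ^n E_{P^κ_x}[r(X_n)]`. -/
noncomputable def discVal {X : Type*} [MeasurableSpace X] (κ : Kernel X X) (γ : ℝ)
    (r : X → ℝ) (x : X) : ℝ :=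
  ∑' n : ℕ, γ ^ n * ∫ y, r y ∂(kIter κ n x)

/-- The objective `J(κ) = ∫ V_κ dμ₀`. -/
noncomputable def discJ {X : Type*} [MeasurableSpace X] (κ : Kernel X X) (γ : ℝ)
    (r : X → ℝ) (μ₀ : Measure X) : ℝ :=
  ∫ x, discVal κ γ r x ∂μ₀

/-- The law `μ^η_t` of `X_t` under the `η`-chain started from `μ₀`. -/
noncomputable def marginal {X : Type*} [MeasurableSpace X] (η : Kernel X X)
    (μ₀ : Measure X) (t : ℕ) : Measure X :=
  μ₀.bind (kIter η t)

/-!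
Both values satisfy the Bellman equation `V_ζ = r + γ ζ V_ζ`. Subtracting the two equations,
`W := V_η - V_κ` solves `W = γ η W + γ G`. Integrating against `μ^η_t` and using
`μ^η_t η = μ^η_{t+1}` gives `D_t = γ D_{t+1} + γ ∫ G dμ^η_t` for `D_t := ∫ W dμ^η_t`;
unrolling this recursion telescopes, and the remainder `γ^T D_T` vanishes because
`D` is bounded and `γ < 1`.
-/

open Filter Topology in
lemma hasSum_of_eq_mul_add_mul_succ {γ : ℝ} (hγ : ‖γ‖ < 1) {D a : ℕ → ℝ} {CD Ca : ℝ}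
    (hD : ∀ t, ‖D t‖ ≤ CD) (ha : ∀ t, ‖a t‖ ≤ Ca) (h : ∀ t, D t = γ * D (t + 1) + γ * a t) :
    HasSum (fun t => γ ^ (t + 1) * a t) (D 0) := by
  have partial_sum : ∀ T, ∑ t ∈ Finset.range T, γ ^ (t + 1) * a t = D 0 - γ ^ T * D T := by
    intro T
    induction T with
    | zero => simp
    | succ T ih => rw [Finset.sum_range_succ, ih, h T]; ring
  have hgeom := summable_geometric_of_lt_one (norm_nonneg γ) hγ
  have hsummable : Summable fun t => ‖γ ^ (t + 1) * a t‖ := by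
    refine Summable.of_nonneg_of_le (fun t => norm_nonneg _) (fun t => ?_)
      (hgeom.mul_right (‖γ‖ * Ca))
    rw [norm_mul, norm_pow, pow_succ, mul_assoc]
    exact mul_le_mul_of_nonneg_left (mul_le_mul_of_nonneg_left (ha t) (norm_nonneg γ))
      (by positivity)
  have hrem : Tendsto (fun T => γ ^ T * D T) atTop (𝓝 0) := by
    refine squeeze_zero_norm (fun T => ?_)
      (by simpa using (tendsto_pow_atTop_nhds_zero_of_lt_one (norm_nonneg γ) hγ).mul_const CD)
    rw [norm_mul, norm_pow]
    exact mul_le_mul_of_nonneg_left (hD T) (by positivity)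
  rw [hasSum_iff_tendsto_nat_of_summable_norm hsummable]
  simp_rw [partial_sum]
  simpa using tendsto_const_nhds.sub hrem

lemma hasSum_integral_of_norm_le_summable {α E : Type*} [MeasurableSpace α] [NormedAddCommGroup E]
    [NormedSpace ℝ E] [CompleteSpace E] {μ : Measure α} [IsFiniteMeasure μ] {F : ℕ → α → E}
    {b : ℕ → ℝ} (hF : ∀ n, AEStronglyMeasurable (F n) μ) (hb : Summable b)
    (hFb : ∀ n x, ‖F n x‖ ≤ b n) :
    HasSum (fun n => ∫ x, F n x ∂μ) (∫ x, ∑' n, F n x ∂μ) :=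
  hasSum_integral_of_dominated_convergence (fun n _ => b n) hF (fun n => ae_of_all _ (hFb n))
    (ae_of_all _ fun _ => hb) (integrable_const _)
    (ae_of_all _ fun x => (hb.of_norm_bounded (hFb · x)).hasSum)

lemma norm_integral_le_of_forall_norm_le {α E : Type*} [MeasurableSpace α] [NormedAddCommGroup E]
    [NormedSpace ℝ E] {μ : Measure α} [IsProbabilityMeasure μ] {f : α → E} {C : ℝ}
    (h : ∀ x, ‖f x‖ ≤ C) : ‖∫ x, f x ∂μ‖ ≤ C := by
  simpa using norm_integral_le_of_norm_le_const (μ := μ) (ae_of_all _ h)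

lemma integrable_of_forall_norm_le {α : Type*} [MeasurableSpace α] {μ : Measure α}
    [IsFiniteMeasure μ] {f : α → ℝ} {C : ℝ} (hf : Measurable f) (h : ∀ x, ‖f x‖ ≤ C) :
    Integrable f μ :=
  .of_bound hf.aestronglyMeasurable C (ae_of_all μ h)

lemma integral_bind_kernel {α β E : Type*} [MeasurableSpace α] [MeasurableSpace β]
    [NormedAddCommGroup E] [NormedSpace ℝ E] {μ : Measure α} (κ : Kernel α β) {f : β → E}
    (hf : Integrable f (μ.bind κ)) :
    ∫ y, f y ∂(μ.bind κ) = ∫ x, ∫ y, f y ∂(κ x) ∂μ := by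
  rw [Measure.comp_eq_comp_const_apply] at hf ⊢
  simpa using Kernel.integral_comp hf

section MarkovChain

variable {X : Type*} [MeasurableSpace X]

instance isMarkovKernel_kIter (κ : Kernel X X) [IsMarkovKernel κ] (n : ℕ) :
    IsMarkovKernel (kIter κ n) := by
  induction n with
  | zero => rw [kIter]; infer_instance
  | succ n ih => rw [kIter]; infer_instance

lemma kIter_succ_eq_kIter_comp (κ : Kernel X X) (n : ℕ) : kIter κ (n + 1) = kIter κ n ∘ₖ κ := by
  induction n with
  | zero => simp only [kIter, Kernel.comp_id, Kernel.id_comp]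
  | succ n ih =>
    conv_lhs => rw [kIter, ih, ← Kernel.comp_assoc]
    rfl

lemma marginal_zero (η : Kernel X X) (μ₀ : Measure X) : marginal η μ₀ 0 = μ₀ := by
  simp [marginal, kIter]

lemma marginal_succ (η : Kernel X X) (μ₀ : Measure X) (t : ℕ) :
    marginal η μ₀ (t + 1) = (marginal η μ₀ t).bind η := by
  rw [marginal, marginal, kIter,
    Measure.bind_bind (kIter η t).aemeasurable η.aemeasurable]
  rfl

instance isProbabilityMeasure_marginal (η : Kernel X X) [IsMarkovKernel η] (μ₀ : Measure X)
    [IsProbabilityMeasure μ₀] (t : ℕ) : IsProbabilityMeasure (marginal η μ₀ t) := by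
  rw [marginal]; infer_instance

section DiscountedValue

variable {κ : Kernel X X} [IsMarkovKernel κ] {γ : ℝ} {r : X → ℝ} {C : ℝ}

lemma norm_discVal_term_le (hrC : ∀ x, ‖r x‖ ≤ C) (n : ℕ) (x : X) :
    ‖γ ^ n * ∫ y, r y ∂(kIter κ n x)‖ ≤ ‖γ‖ ^ n * C := by
  rw [norm_mul, norm_pow]
  exact mul_le_mul_of_nonneg_left (norm_integral_le_of_forall_norm_le hrC) (by positivity)

lemma hasSum_discVal (hγ : ‖γ‖ < 1) (hrC : ∀ x, ‖r x‖ ≤ C) (x : X) :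
    HasSum (fun n => γ ^ n * ∫ y, r y ∂(kIter κ n x)) (discVal κ γ r x) :=
  ((summable_geometric_of_lt_one (norm_nonneg γ) hγ).mul_right C).of_norm_bounded
    (norm_discVal_term_le hrC · x) |>.hasSum

lemma norm_discVal_le (hγ : ‖γ‖ < 1) (hrC : ∀ x, ‖r x‖ ≤ C) (x : X) :
    ‖discVal κ γ r x‖ ≤ (1 - ‖γ‖)⁻¹ * C :=
  tsum_of_norm_bounded ((hasSum_geometric_of_lt_one (norm_nonneg γ) hγ).mul_right C)
    (norm_discVal_term_le hrC · x)

lemma measurable_discVal (hγ : ‖γ‖ < 1) (hr : Measurable r) (hrC : ∀ x, ‖r x‖ ≤ C) :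
    Measurable (discVal κ γ r) :=
  measurable_of_tendsto_metrizable
    (fun _ => Finset.measurable_sum _ fun _ _ =>
      hr.stronglyMeasurable.integral_kernel.measurable.const_mul _)
    (tendsto_pi_nhds.2 fun x => (hasSum_discVal hγ hrC x).tendsto_sum_nat)

lemma integrable_discVal (hγ : ‖γ‖ < 1) (hr : Measurable r) (hrC : ∀ x, ‖r x‖ ≤ C)
    (μ : Measure X) [IsFiniteMeasure μ] : Integrable (discVal κ γ r) μ :=
  integrable_of_forall_norm_le (measurable_discVal hγ hr hrC) (norm_discVal_le hγ hrC)

lemma discVal_eq_add_integral (hγ : ‖γ‖ < 1) (hr : Measurable r) (hrC : ∀ x, ‖r x‖ ≤ C)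
    (x : X) : discVal κ γ r x = r x + γ * ∫ y, discVal κ γ r y ∂(κ x) := by
  have hshift : ∀ n, γ ^ (n + 1) * ∫ y, r y ∂(kIter κ (n + 1) x)
      = γ * ∫ z, γ ^ n * ∫ y, r y ∂(kIter κ n z) ∂(κ x) := fun n => by
    rw [kIter_succ_eq_kIter_comp, Kernel.integral_comp (integrable_of_forall_norm_le hr hrC),
      integral_const_mul, pow_succ', mul_assoc]
  have htail : HasSum (fun n => γ ^ (n + 1) * ∫ y, r y ∂(kIter κ (n + 1) x))
      (γ * ∫ y, discVal κ γ r y ∂(κ x)) := by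
    simp_rw [hshift]
    exact (hasSum_integral_of_norm_le_summable
      (fun _ => (hr.stronglyMeasurable.integral_kernel.measurable.const_mul _).aestronglyMeasurable)
      ((summable_geometric_of_lt_one (norm_nonneg γ) hγ).mul_right C)
      (norm_discVal_term_le (κ := κ) hrC)).mul_left γ
  have h0 : ∫ y, r y ∂(kIter κ 0 x) = r x := by
    rw [kIter, Kernel.id_apply, integral_dirac' r x hr.stronglyMeasurable]
  simpa [h0, add_comm] using (hasSum_discVal hγ hrC x).unique ((hasSum_nat_add_iff 1).1 htail)

lemma discVal_sub_discVal_eq {η : Kernel X X} [IsMarkovKernel η] (hγ : ‖γ‖ < 1)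
    (hr : Measurable r) (hrC : ∀ x, ‖r x‖ ≤ C) (x : X) :
    discVal η γ r x - discVal κ γ r x
      = γ * ∫ y, discVal η γ r y - discVal κ γ r y ∂(η x)
        + γ * ((∫ y, discVal κ γ r y ∂(η x)) - ∫ y, discVal κ γ r y ∂(κ x)) := by
  rw [integral_sub (integrable_discVal hγ hr hrC _) (integrable_discVal hγ hr hrC _)]
  linear_combination discVal_eq_add_integral (κ := η) hγ hr hrC x
    - discVal_eq_add_integral (κ := κ) hγ hr hrC x

end DiscountedValue

lemma integral_eq_tsum_integral_marginal (η : Kernel X X) [IsMarkovKernel η] (μ₀ : Measure X)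
    [IsProbabilityMeasure μ₀] {γ : ℝ} (hγ : ‖γ‖ < 1) {W g : X → ℝ} {CW Cg : ℝ}
    (hWm : Measurable W) (hWC : ∀ x, ‖W x‖ ≤ CW) (hgm : Measurable g) (hgC : ∀ x, ‖g x‖ ≤ Cg)
    (hWg : ∀ x, W x = γ * ∫ y, W y ∂(η x) + γ * g x) :
    ∫ x, W x ∂μ₀ = ∑' t, γ ^ (t + 1) * ∫ x, g x ∂(marginal η μ₀ t) := by
  have hηW : ∀ x, ‖∫ y, W y ∂(η x)‖ ≤ CW := fun x => norm_integral_le_of_forall_norm_le hWC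
  have step : ∀ t, ∫ x, W x ∂(marginal η μ₀ t)
      = γ * ∫ x, W x ∂(marginal η μ₀ (t + 1)) + γ * ∫ x, g x ∂(marginal η μ₀ t) := fun t => by
    rw [integral_congr_ae (ae_of_all _ hWg), integral_add, integral_const_mul, integral_const_mul,
      marginal_succ, integral_bind_kernel η (integrable_of_forall_norm_le hWm hWC)]
    · exact (integrable_of_forall_norm_le hWm.stronglyMeasurable.integral_kernel.measurable
        hηW).const_mul γ
    · exact (integrable_of_forall_norm_le hgm hgC).const_mul γ
  rw [(hasSum_of_eq_mul_add_mul_succ hγ (fun _ => norm_integral_le_of_forall_norm_le hWC)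
    (fun _ => norm_integral_le_of_forall_norm_le hgC) step).tsum_eq, marginal_zero]

end MarkovChain

/-- **Telescoping value-difference identity** (the paper's Lemma 3, from Yu et al.):
with `G(x) = ∫ V_κ dη(x,·) − ∫ V_κ dκ(x,·)` the one-step value-prediction gap,
`J(η) − J(κ) = Σ_{t≥0} γ^{t+1} ∫ G dμ^η_t`. -/
theorem stmt7 {X : Type*} [MeasurableSpace X]
    (κ η : Kernel X X) [IsMarkovKernel κ] [IsMarkovKernel η]
    (γ : ℝ) (hγ0 : 0 ≤ γ) (hγ1 : γ < 1)
    (r : X → ℝ) (hr : Measurable r)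
    (rmax : ℝ) (hr0 : ∀ x, 0 ≤ r x) (hrmax : ∀ x, r x ≤ rmax)
    (μ₀ : Measure X) [IsProbabilityMeasure μ₀]
    (G : X → ℝ)
    (hG : ∀ x, G x = (∫ y, discVal κ γ r y ∂(η x)) - ∫ y, discVal κ γ r y ∂(κ x)) :
    discJ η γ r μ₀ - discJ κ γ r μ₀
      = ∑' t : ℕ, γ ^ (t + 1) * ∫ x, G x ∂(marginal η μ₀ t) := by
  have hγ : ‖γ‖ < 1 := by rwa [Real.norm_of_nonneg hγ0]
  have hrC : ∀ x, ‖r x‖ ≤ rmax := fun x => by rw [Real.norm_of_nonneg (hr0 x)]; exact hrmax x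
  set B := (1 - ‖γ‖)⁻¹ * rmax
  have hVκ : ∀ x, ‖discVal κ γ r x‖ ≤ B := norm_discVal_le hγ hrC
  have hVη : ∀ x, ‖discVal η γ r x‖ ≤ B := norm_discVal_le hγ hrC
  have hVκm := measurable_discVal (κ := κ) hγ hr hrC
  have hVηm := measurable_discVal (κ := η) hγ hr hrC
  have hGm : Measurable G := by
    rw [funext hG]
    exact hVκm.stronglyMeasurable.integral_kernel.measurable.sub
      hVκm.stronglyMeasurable.integral_kernel.measurable
  have hGC : ∀ x, ‖G x‖ ≤ B + B := fun x => by
    rw [hG]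
    exact (norm_sub_le _ _).trans (add_le_add (norm_integral_le_of_forall_norm_le hVκ)
      (norm_integral_le_of_forall_norm_le hVκ))
  rw [discJ, discJ, ← integral_sub (integrable_discVal hγ hr hrC _)
    (integrable_discVal hγ hr hrC _)]
  exact integral_eq_tsum_integral_marginal η μ₀ hγ (hVηm.sub hVκm)
    (fun x => (norm_sub_le _ _).trans (add_le_add (hVη x) (hVκ x))) hGm hGC
    fun x => by rw [hG]; exact discVal_sub_discVal_eq hγ hr hrC x
end
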